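/- arXiv:math/0201323 — 3 statements merged into one kernel-verified Lean document; each statement's English description precedes it below -/
import Mathlib

section
/- Let p be an odd prime and ζ a primitive p-th root of unity. The reduction map ℤ[ζ]^* → (ℤ[ζ]/(1-ζ))^* on unit groups is surjective. -/
open NumberField

set_option maxHeartbeats 1000000 in
set_option synthInstance.maxHeartbeats 400000 in
/-- For an odd prime `p` and `ζ` a primitive `p`-th root of unity, the reduction map
`ℤ[ζ]ˣ → (ℤ[ζ]/(1-ζ))ˣ` on unit groups is surjective. -/
theorem stmt_2 (p : ℕ+) (hp : (p : ℕ).Prime) (hodd : Odd (p : ℕ))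
    (ζ : 𝓞 (CyclotomicField p ℚ)) (hζ : IsPrimitiveRoot ζ (p : ℕ)) :
    Function.Surjective
      (Units.map (Ideal.Quotient.mk
        (Ideal.span ({1 - ζ} : Set (𝓞 (CyclotomicField p ℚ))))).toMonoidHom) := by
  haveI hcyc : IsCyclotomicExtension {(p : ℕ)} ℚ (CyclotomicField p ℚ) :=
    CyclotomicField.isCyclotomicExtension _ _
  haveI hfact : Fact (p : ℕ).Prime := ⟨hp⟩
  haveI : NumberField (CyclotomicField p ℚ) :=
    IsCyclotomicExtension.numberField {(p : ℕ)} ℚ (CyclotomicField p ℚ)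
  -- p ≠ 2
  have hp2 : p ≠ 2 := by
    intro h
    rw [h] at hodd
    exact (Nat.not_even_iff_odd.mpr hodd) (by decide)
  -- transfer to the `K`-level primitive root
  have hinj : Function.Injective (algebraMap (𝓞 (CyclotomicField p ℚ)) (CyclotomicField p ℚ)) := RingOfIntegers.coe_injective
  have hζK : IsPrimitiveRoot (algebraMap (𝓞 (CyclotomicField p ℚ)) (CyclotomicField p ℚ) ζ) (p : ℕ) := hζ.map_of_injective hinj
  have htoInt : hζK.toInteger = ζ := by
    ext
    rfl
  -- basic facts about ζ - 1
  have hprime : Prime (ζ - 1) := by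
    have := hζK.zeta_sub_one_prime'
    rwa [htoInt] at this
  have hdvd : (ζ - 1) ∣ ((p : ℕ) : 𝓞 (CyclotomicField p ℚ)) := by
    have := hζK.toInteger_sub_one_dvd_prime'
    rwa [htoInt] at this
  set I : Ideal (𝓞 (CyclotomicField p ℚ)) := Ideal.span ({1 - ζ} : Set (𝓞 (CyclotomicField p ℚ))) with hI
  have hIeq : I = Ideal.span ({ζ - 1} : Set (𝓞 (CyclotomicField p ℚ))) := by
    rw [hI, ← Ideal.span_singleton_neg, neg_sub]
  have hζne1 : ζ - 1 ≠ 0 := hprime.ne_zero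
  have hIprime : I.IsPrime := by
    rw [hIeq]
    exact (Ideal.span_singleton_prime hζne1).mpr hprime
  have hIbot : I ≠ ⊥ := by
    rw [hIeq, Ne, Ideal.span_singleton_eq_bot]
    exact hζne1
  haveI hImax : I.IsMaximal := hIprime.isMaximal hIbot
  letI : Field (𝓞 (CyclotomicField p ℚ) ⧸ I) := Ideal.Quotient.field I
  -- the quotient is finite of cardinality p
  haveI hfin : Finite (𝓞 (CyclotomicField p ℚ) ⧸ I) := by
    rw [hIeq]
    have := hζK.finite_quotient_span_sub_one'
    rwa [htoInt] at this
  have hcard : Nat.card (𝓞 (CyclotomicField p ℚ) ⧸ I) = (p : ℕ) := by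
    rw [hIeq]
    have h1 := hζK.card_quotient_toInteger_sub_one
    have h2 := hζK.norm_toInteger_sub_one_of_prime_ne_two' (by exact_mod_cast hp2)
    rw [htoInt] at h1 h2
    rw [h1, h2]
    simp
  -- characteristic p and the map from ZMod p
  have hpzero : (((p : ℕ) : 𝓞 (CyclotomicField p ℚ) ⧸ I)) = 0 := by
    rw [← map_natCast (Ideal.Quotient.mk I), Ideal.Quotient.eq_zero_iff_mem, hIeq]
    exact Ideal.mem_span_singleton.mpr hdvd
  haveI : CharP (𝓞 (CyclotomicField p ℚ) ⧸ I) (p : ℕ) := (CharP.charP_iff_prime_eq_zero hp).mpr hpzero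
  set f : ZMod (p : ℕ) →+* 𝓞 (CyclotomicField p ℚ) ⧸ I := ZMod.castHom (dvd_refl (p : ℕ)) (𝓞 (CyclotomicField p ℚ) ⧸ I) with hf
  have hbij : Function.Bijective f := by
    refine (Nat.bijective_iff_injective_and_card f).mpr ⟨f.injective, ?_⟩
    rw [Nat.card_zmod, hcard]
  -- main argument
  intro v
  obtain ⟨a, ha⟩ := hbij.surjective (v : 𝓞 (CyclotomicField p ℚ) ⧸ I)
  have ha0 : a ≠ 0 := by
    intro h
    rw [h, map_zero] at ha
    exact v.ne_zero ha.symm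
  set n : ℕ := a.val with hn
  set m : ℕ := (a⁻¹).val with hm
  have hcastn : ((n : ℕ) : ZMod (p : ℕ)) = a := ZMod.natCast_rightInverse a
  have hcastm : ((m : ℕ) : ZMod (p : ℕ)) = a⁻¹ := ZMod.natCast_rightInverse a⁻¹
  -- n * m ≡ 1 mod p
  have hmod : (n * m) % (p : ℕ) = 1 := by
    have : ((n * m : ℕ) : ZMod (p : ℕ)) = ((1 : ℕ) : ZMod (p : ℕ)) := by
      push_cast
      rw [hcastn, hcastm, mul_inv_cancel₀ ha0]
    have h := (ZMod.natCast_eq_natCast_iff _ _ _).mp this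
    have h1 : 1 % (p : ℕ) = 1 := Nat.mod_eq_of_lt hp.one_lt
    rwa [Nat.ModEq, h1] at h
  have hζnm : ζ ^ (n * m) = ζ := by
    conv_lhs => rw [← Nat.div_add_mod (n * m) (p : ℕ), hmod]
    rw [pow_add, pow_one, pow_mul, hζ.pow_eq_one, one_pow, one_mul]
  -- the cyclotomic unit
  set u : 𝓞 (CyclotomicField p ℚ) := ∑ i ∈ Finset.range n, ζ ^ i with hu
  set w : 𝓞 (CyclotomicField p ℚ) := ∑ j ∈ Finset.range m, (ζ ^ n) ^ j with hw
  have huw : u * w = 1 := by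
    have key : (u * w) * (ζ - 1) = 1 * (ζ - 1) := by
      have h1 : u * (ζ - 1) = ζ ^ n - 1 := geom_sum_mul ζ n
      have h2 : w * (ζ ^ n - 1) = (ζ ^ n) ^ m - 1 := geom_sum_mul (ζ ^ n) m
      calc (u * w) * (ζ - 1) = w * (u * (ζ - 1)) := by ring
        _ = w * (ζ ^ n - 1) := by rw [h1]
        _ = (ζ ^ n) ^ m - 1 := h2
        _ = ζ - 1 := by rw [← pow_mul, hζnm]
        _ = 1 * (ζ - 1) := (one_mul _).symm
    exact mul_right_cancel₀ hζne1 key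
  have huunit : IsUnit u := IsUnit.of_mul_eq_one w huw
  -- image of u in the quotient
  have hmkζ : Ideal.Quotient.mk I ζ = 1 := by
    rw [← map_one (Ideal.Quotient.mk I), Ideal.Quotient.eq, hIeq]
    exact Ideal.mem_span_singleton.mpr dvd_rfl
  have hmku : Ideal.Quotient.mk I u = (v : 𝓞 (CyclotomicField p ℚ) ⧸ I) := by
    rw [hu, map_sum]
    simp only [map_pow, hmkζ, one_pow]
    rw [Finset.sum_const, Finset.card_range, nsmul_eq_mul, mul_one]
    rw [← hcastn] at ha
    rw [← ha, hf]
    simp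
  refine ⟨huunit.unit, ?_⟩
  ext
  simpa using hmku
end

section
/- Let K be a number field with ring of integers O_K, let p be an odd prime unramified in K, and let ζ be a primitive p-th root of unity. Then O_K/pO_K is isomorphic as a ring to O_K[ζ]/(1-ζ)·O_K[ζ]. -/
open NumberField

set_option synthInstance.maxHeartbeats 1000000
set_option maxHeartbeats 2000000

-- auxiliary: if p ∤ disc K then O_K/p is reduced, elementwise
lemma aux_dvd_of_dvd_pow (K : Type*) [Field K] [NumberField K]
    (p : ℕ) (hp : p.Prime) (hur : ¬ ((p : ℤ) ∣ NumberField.discr K))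
    (a : 𝓞 K) (m : ℕ) (h : (p : 𝓞 K) ∣ a ^ m) : (p : 𝓞 K) ∣ a := by
  classical
  haveI : Fact p.Prime := ⟨hp⟩
  let b := RingOfIntegers.basis K
  let f : ℤ →+* ZMod p := Int.castRingHom (ZMod p)
  obtain ⟨w, hw⟩ := h
  have hM0 : ((Algebra.leftMulMatrix b (a ^ m)).map f) = 0 := by
    have h1 : (a ^ m) = (p : ℤ) • w := by rw [hw]; rw [zsmul_eq_mul]; push_cast; ring
    rw [h1, map_smul]
    ext i j
    simp only [Matrix.map_apply, Matrix.smul_apply, smul_eq_mul]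
    push_cast
    simp [ZMod.natCast_self]
  have key : ∀ x : (𝓞 K), IsNilpotent (((Algebra.leftMulMatrix b (a * x)).map f)) := by
    intro x
    have hc : Commute ((Algebra.leftMulMatrix b a).map f)
        ((Algebra.leftMulMatrix b x).map f) := by
      have : Commute (Algebra.leftMulMatrix b a) (Algebra.leftMulMatrix b x) := by
        unfold Commute SemiconjBy
        rw [← map_mul, ← map_mul, mul_comm]
      simpa only [RingHom.mapMatrix_apply] using this.map f.mapMatrix
    have hnil : IsNilpotent ((Algebra.leftMulMatrix b a).map f) := by
      refine ⟨m, ?_⟩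
      have : ((Algebra.leftMulMatrix b a).map f) ^ m
          = ((Algebra.leftMulMatrix b a ^ m).map f) := by
        simp only [← RingHom.mapMatrix_apply, ← map_pow]
      rw [this, ← map_pow, hM0]
    have : ((Algebra.leftMulMatrix b (a * x)).map f)
        = ((Algebra.leftMulMatrix b a).map f) * ((Algebra.leftMulMatrix b x).map f) := by
      simp only [← RingHom.mapMatrix_apply, ← map_mul]
    rw [this]
    exact hc.isNilpotent_mul_right hnil
  have htr : ∀ x : (𝓞 K), f (Algebra.trace ℤ (𝓞 K) (a * x)) = 0 := by
    intro x
    have h1 := Matrix.isNilpotent_trace_of_isNilpotent (key x)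
    have h2 : Matrix.trace ((Algebra.leftMulMatrix b (a * x)).map f)
        = f (Matrix.trace (Algebra.leftMulMatrix b (a * x))) := by
      simp [Matrix.trace, Matrix.diag, Matrix.map_apply, map_sum]
    rw [h2] at h1
    have := h1.eq_zero
    rwa [Algebra.trace_eq_matrix_trace b (a * x)]
  set c : _ → ℤ := b.equivFun a with hc
  have hTc : (Algebra.traceMatrix ℤ b).mulVec c = fun i => Algebra.trace ℤ (𝓞 K) (a * b i) :=
    Algebra.traceMatrix_of_basis_mulVec b a
  have hmv : ((Algebra.traceMatrix ℤ b).map f).mulVec (fun i => f (c i)) = 0 := by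
    ext i
    have : ((Algebra.traceMatrix ℤ b).map f).mulVec (fun i => f (c i)) i
        = f (((Algebra.traceMatrix ℤ b).mulVec c) i) := by
      simp [Matrix.mulVec, dotProduct, Matrix.map_apply, map_sum]
    rw [this, hTc]
    simpa using htr (b i)
  have hdet : ((Algebra.traceMatrix ℤ b).map f).det ≠ 0 := by
    rw [show ((Algebra.traceMatrix ℤ b).map f) = f.mapMatrix (Algebra.traceMatrix ℤ b) from rfl, ← RingHom.map_det]
    have : (Algebra.traceMatrix ℤ b).det = NumberField.discr K := rfl
    rw [this]
    simpa [f, ZMod.intCast_zmod_eq_zero_iff_dvd] using hur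
  have hc0 : (fun i => f (c i)) = 0 := Matrix.eq_zero_of_mulVec_eq_zero hdet hmv
  have hpc : ∀ i, (p : ℤ) ∣ c i := by
    intro i
    have := congrFun hc0 i
    simpa [f, ZMod.intCast_zmod_eq_zero_iff_dvd] using this
  have : (p : (𝓞 K)) ∣ ∑ i, c i • b i := by
    refine Finset.dvd_sum fun i _ => ?_
    have h1 : c i • (b i : (𝓞 K)) = ((c i : ℤ) : (𝓞 K)) * b i := zsmul_eq_mul _ _
    rw [h1]
    refine Dvd.dvd.mul_right ?_ _
    have := map_dvd (algebraMap ℤ (𝓞 K)) (hpc i)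
    simpa using this
  rwa [b.sum_equivFun] at this

/-- If `K` is a number field, `p` an odd prime unramified in `K` (i.e. not dividing the
discriminant) and `ζ` a primitive `p`-th root of unity in an extension `L` of `K`, then
`O_K/pO_K ≅ O_K[ζ]/(1-ζ)O_K[ζ]`. -/
theorem stmt_3 (K L : Type*) [Field K] [NumberField K] [Field L] [Algebra K L]
    [Algebra (𝓞 K) L] [IsScalarTower (𝓞 K) K L]
    (p : ℕ) (hp : p.Prime) (hodd : Odd p)
    (hur : ¬ ((p : ℤ) ∣ NumberField.discr K))
    (ζ : L) (hζ : IsPrimitiveRoot ζ p) :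
    Nonempty ((𝓞 K ⧸ Ideal.span ({(p : 𝓞 K)} : Set (𝓞 K))) ≃+*
      ((Algebra.adjoin (𝓞 K) ({ζ} : Set L)) ⧸
        Ideal.span ({1 - ⟨ζ, Algebra.subset_adjoin rfl⟩} :
          Set (Algebra.adjoin (𝓞 K) ({ζ} : Set L))))) := by
  classical
  haveI : Fact p.Prime := ⟨hp⟩
  set A := Algebra.adjoin (𝓞 K) ({ζ} : Set L) with hA
  set z : A := ⟨ζ, Algebra.subset_adjoin rfl⟩ with hzdef
  set I : Ideal A := Ideal.span {1 - z} with hI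
  -- A is a domain
  haveI : IsDomain A := Function.Injective.isDomain (A.val).toRingHom Subtype.val_injective
  -- z is a primitive p-th root of unity in A
  have hz : IsPrimitiveRoot z p := by
    have h1 : IsPrimitiveRoot (A.val z) p := hζ
    exact h1.of_map_of_injective Subtype.val_injective
  have hp1 : p - 1 + 1 = p := Nat.succ_pred_eq_of_pos hp.pos
  -- product formula : ∏ (1 - z^(k+1)) = p
  have hzprod : ∏ k ∈ Finset.range (p - 1), (1 - z ^ (k + 1)) = ((p : ℕ) : A) := by
    have h2 : IsPrimitiveRoot z ((p - 1) + 1) := by rwa [hp1]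
    have := h2.prod_one_sub_pow_eq_order
    rw [this]
    rw [← Nat.cast_succ, Nat.succ_eq_add_one, hp1]
  -- (1 - z) divides p in A
  have hpz : (1 - z) ∣ ((p : ℕ) : A) := by
    rw [← hzprod]
    have h0 : (0 : ℕ) ∈ Finset.range (p - 1) := by
      simp [Nat.lt_of_lt_of_le Nat.zero_lt_one (Nat.le_sub_one_of_lt hp.one_lt)]
    have := Finset.dvd_prod_of_mem (fun k => 1 - z ^ (k + 1)) h0
    simpa using this
  -- p divides (1 - z)^(p-1) in A
  have hpdvd : ((p : ℕ) : A) ∣ (1 - z) ^ (p - 1) := by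
    rw [← hzprod]
    have heq : (1 - z) ^ (p - 1) = ∏ _k ∈ Finset.range (p - 1), (1 - z) := by
      rw [Finset.prod_const, Finset.card_range]
    rw [heq]
    refine Finset.prod_dvd_prod_of_dvd _ _ ?_
    intro k hk
    rw [Finset.mem_range] at hk
    have hik : ¬ p ∣ (k + 1) := by
      refine Nat.not_dvd_of_pos_of_lt (Nat.succ_pos k) ?_
      omega
    have hco : Nat.Coprime (k + 1) p := (Nat.coprime_comm.mp (hp.coprime_iff_not_dvd.mpr hik))
    obtain ⟨j, -, hj⟩ := Nat.exists_mul_mod_eq_one_of_coprime hco hp.one_lt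
    have hzj : (z ^ (k + 1)) ^ j = z := by
      rw [← pow_mul]
      conv_rhs => rw [← pow_one z]
      have hmod : (k + 1) * j % p = 1 := hj
      calc z ^ ((k + 1) * j)
          = z ^ (p * (((k + 1) * j) / p) + ((k + 1) * j) % p) := by
            rw [Nat.div_add_mod]
        _ = (z ^ p) ^ (((k + 1) * j) / p) * z ^ (((k + 1) * j) % p) := by
            rw [pow_add, pow_mul]
        _ = z ^ 1 := by rw [hz.pow_eq_one, one_pow, one_mul, hmod]
    calc (1 - z ^ (k + 1)) ∣ 1 - (z ^ (k + 1)) ^ j := one_sub_dvd_one_sub_pow _ _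
      _ = 1 - z := by rw [hzj]
  -- the ring hom ψ : 𝓞 K → A ⧸ I
  set ψ : 𝓞 K →+* A ⧸ I := (Ideal.Quotient.mk I).comp (algebraMap (𝓞 K) A) with hψ
  -- surjectivity
  have hsurj : Function.Surjective ψ := by
    intro x
    obtain ⟨y, rfl⟩ := Ideal.Quotient.mk_surjective x
    obtain ⟨y, hy⟩ := y
    refine Algebra.adjoin_induction (s := ({ζ} : Set L))
      (p := fun v hv => ∃ r : 𝓞 K, ψ r = Ideal.Quotient.mk I ⟨v, hv⟩) ?_ ?_ ?_ ?_ hy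
    · intro x hx
      rcases Set.mem_singleton_iff.mp hx with rfl
      refine ⟨1, ?_⟩
      have : (⟨x, Algebra.subset_adjoin hx⟩ : A) = z := rfl
      rw [this, map_one]
      show Ideal.Quotient.mk I 1 = Ideal.Quotient.mk I z
      rw [Ideal.Quotient.eq, hI]
      exact Ideal.subset_span rfl
    · intro r
      exact ⟨r, rfl⟩
    · rintro v w hv hw ⟨r1, hr1⟩ ⟨r2, hr2⟩
      exact ⟨r1 + r2, by rw [map_add, hr1, hr2]; rfl⟩
    · rintro v w hv hw ⟨r1, hr1⟩ ⟨r2, hr2⟩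
      exact ⟨r1 * r2, by rw [map_mul, hr1, hr2]; rfl⟩
  -- every element of A is integral over ℤ
  have hint : ∀ x : A, IsIntegral ℤ (x : L) := by
    rintro ⟨x, hx⟩
    refine Algebra.adjoin_induction (s := ({ζ} : Set L))
      (p := fun v _ => IsIntegral ℤ v) ?_ ?_ ?_ ?_ hx
    · intro x hx
      rcases Set.mem_singleton_iff.mp hx with rfl
      exact hζ.isIntegral hp.pos
    · intro r
      have h1 : IsIntegral ℤ (algebraMap (𝓞 K) K r) := RingOfIntegers.isIntegral_coe r
      have h2 : algebraMap (𝓞 K) L r = algebraMap K L (algebraMap (𝓞 K) K r) :=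
        (IsScalarTower.algebraMap_apply (𝓞 K) K L r)
      rw [h2]
      exact h1.map (IsScalarTower.toAlgHom ℤ K L)
    · exact fun v w _ _ h1 h2 => h1.add h2
    · exact fun v w _ _ h1 h2 => h1.mul h2
  -- kernel computation
  have hker : RingHom.ker ψ = Ideal.span {(p : 𝓞 K)} := by
    ext a
    rw [RingHom.mem_ker, Ideal.mem_span_singleton]
    constructor
    · intro ha
      rw [hψ, RingHom.comp_apply, Ideal.Quotient.eq_zero_iff_mem, hI,
        Ideal.mem_span_singleton] at ha
      obtain ⟨y, hy⟩ := ha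
      obtain ⟨δ, hδ⟩ := hpdvd
      have hpow : algebraMap (𝓞 K) A (a ^ (p - 1)) = ((p : ℕ) : A) * (δ * y ^ (p - 1)) := by
        rw [map_pow, hy, mul_pow, hδ]; ring
      set t : A := δ * y ^ (p - 1) with ht
      -- a^(p-1)/p lies in K and is integral over ℤ
      have hKL : Function.Injective (algebraMap K L) := (algebraMap K L).injective
      haveI : CharZero L := charZero_of_injective_algebraMap hKL
      have hpK : ((p : ℕ) : K) ≠ 0 := Nat.cast_ne_zero.mpr hp.pos.ne'
      have hxL : algebraMap K L ((algebraMap (𝓞 K) K (a ^ (p - 1))) / p) = (t : L) := by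
        have h1 : algebraMap (𝓞 K) L (a ^ (p - 1)) = ((p : ℕ) : L) * (t : L) :=
          congrArg Subtype.val hpow
        have hpL : ((p : ℕ) : L) ≠ 0 := Nat.cast_ne_zero.mpr hp.pos.ne'
        rw [map_div₀, ← IsScalarTower.algebraMap_apply (𝓞 K) K L, h1, map_natCast]
        exact mul_div_cancel_left₀ _ hpL
      have hxint : IsIntegral ℤ ((algebraMap (𝓞 K) K (a ^ (p - 1))) / p) := by
        have h1 : IsIntegral ℤ (algebraMap K L ((algebraMap (𝓞 K) K (a ^ (p - 1))) / p)) := by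
          rw [hxL]; exact hint t
        exact (isIntegral_algebraMap_iff hKL).mp h1
      -- hence p ∣ a^(p-1) in 𝓞 K
      set r : 𝓞 K := ⟨_, hxint⟩ with hr
      have hpr : (p : 𝓞 K) * r = a ^ (p - 1) := by
        apply RingOfIntegers.ext
        show algebraMap (𝓞 K) K ((p : 𝓞 K) * r) = algebraMap (𝓞 K) K (a ^ (p - 1))
        rw [map_mul, map_natCast,
          show algebraMap (𝓞 K) K r = (algebraMap (𝓞 K) K (a ^ (p - 1))) / p from rfl]
        field_simp
      have hdvdpow : (p : 𝓞 K) ∣ a ^ (p - 1) := ⟨r, hpr.symm⟩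
      exact aux_dvd_of_dvd_pow K p hp hur a (p - 1) hdvdpow
    · rintro ⟨c, rfl⟩
      rw [map_mul]
      have : ψ (p : 𝓞 K) = 0 := by
        rw [hψ, RingHom.comp_apply, map_natCast, Ideal.Quotient.eq_zero_iff_mem, hI,
          Ideal.mem_span_singleton]
        exact hpz
      rw [this, zero_mul]
  exact ⟨(Ideal.quotEquivOfEq hker.symm).trans (RingHom.quotientKerEquivOfSurjective hsurj)⟩
end

section
/- Let p be an odd prime and let C = (ℤ/pℤ)^* act on itself trivially via the identification with Gal-action; define the Stickelberger element θ = Σ_{δ ∈ C} t(δ)·δ^{-1} ∈ ℤ[C], where t(δ) is the least nonnegative residue of δ mod p. Then the image of the Stickelberger ideal J = ℤ[C]·(θ/p) ∩ ℤ[C] under the augmentation map ε : ℤ[C] → ℤ is the ideal ((p-1)/2)·ℤ, provided p ≠ 2. -/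
open Finset

lemma sum_val_zmod (p : ℕ) [NeZero p] : ∑ x : ZMod p, x.val = p * (p-1) / 2 := by
  rw [← Finset.sum_range_id]
  refine Finset.sum_nbij' (fun x => x.val) (fun i => (i : ZMod p)) ?_ ?_ ?_ ?_ ?_
  · intro x _; simpa [Finset.mem_range] using x.val_lt
  · intro i _; simp
  · intro x _; simp [ZMod.natCast_val, ZMod.cast_id]
  · intro i hi; exact ZMod.val_cast_of_lt (mem_range.mp hi)
  · intro x _; rfl

lemma sum_val_units (p : ℕ) [NeZero p] (hp : p.Prime) :
    ∑ δ : (ZMod p)ˣ, ((δ : ZMod p)).val = p * (p-1) / 2 := by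
  haveI := Fact.mk hp
  rw [← sum_val_zmod p]
  rw [show (∑ δ : (ZMod p)ˣ, ((δ : ZMod p)).val)
      = ∑ a : {x : ZMod p // x ≠ 0}, ((a : ZMod p)).val from
    Fintype.sum_equiv unitsEquivNeZero _ _ (fun δ => rfl)]
  rw [← Finset.sum_subtype (Finset.univ.filter (fun x : ZMod p => x ≠ 0)) (by simp)
    (fun x => x.val)]
  refine Finset.sum_filter_of_ne ?_
  intro x _ h hx0
  simp [hx0] at h

/-- Let `p` be an odd prime, `C = (ℤ/pℤ)ˣ`, and
`θ = Σ_{δ ∈ C} t(δ)·δ⁻¹ ∈ ℤ[C]` the Stickelberger element, where `t(δ)` is the least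
nonnegative residue of `δ` mod `p`.  The image under the augmentation map
`ε : ℤ[C] → ℤ` of the Stickelberger ideal `J = ℤ[C]·(θ/p) ∩ ℤ[C]`
(equivalently, `J = {x ∈ ℤ[C] : p·x ∈ ℤ[C]·θ}`) is the ideal `((p-1)/2)·ℤ`. -/
theorem stmt_17 (p : ℕ) [NeZero p] (hp : p.Prime) (hodd : Odd p) :
    (⇑((MonoidAlgebra.lift ℤ ℤ (ZMod p)ˣ) 1) ''
      {x : MonoidAlgebra ℤ (ZMod p)ˣ | ∃ y : MonoidAlgebra ℤ (ZMod p)ˣ,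
        (p : MonoidAlgebra ℤ (ZMod p)ˣ) * x =
          y * ∑ δ : (ZMod p)ˣ,
            (((δ : ZMod p).val : ℤ)) • MonoidAlgebra.of ℤ (ZMod p)ˣ δ⁻¹})
      = {m : ℤ | (((p - 1) / 2 : ℕ) : ℤ) ∣ m} := by
  classical
  set C := (ZMod p)ˣ
  set ε : MonoidAlgebra ℤ C →ₐ[ℤ] ℤ := (MonoidAlgebra.lift ℤ ℤ C) 1 with hε
  set θ : MonoidAlgebra ℤ C :=
    ∑ δ : C, (((δ : ZMod p).val : ℤ)) • MonoidAlgebra.of ℤ C δ⁻¹ with hθ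
  set d : ℤ := (((p - 1) / 2 : ℕ) : ℤ) with hd
  have hεof : ∀ g : C, ε (MonoidAlgebra.of ℤ C g) = 1 := by
    intro g; simp [hε, MonoidAlgebra.lift_of]
  have heven : 2 ∣ p - 1 := (Nat.Odd.sub_odd hodd odd_one).two_dvd
  have hS : ∑ δ : C, ((δ : ZMod p)).val = p * ((p - 1) / 2) := by
    rw [sum_val_units p hp, Nat.mul_div_assoc p heven]
  have hεθ : ε θ = (p : ℤ) * d := by
    rw [hθ, map_sum]
    simp only [map_zsmul, hεof, smul_eq_mul, mul_one]
    rw [← Nat.cast_sum, hS, hd]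
    push_cast
    ring
  have hp0 : (p : ℤ) ≠ 0 := by exact_mod_cast hp.ne_zero
  ext m
  simp only [Set.mem_image, Set.mem_setOf_eq]
  constructor
  · rintro ⟨x, ⟨y, hxy⟩, rfl⟩
    have := congrArg ε hxy
    rw [map_mul, map_mul, map_natCast, hεθ] at this
    refine ⟨ε y, mul_left_cancel₀ hp0 ?_⟩
    rw [this]; ring
  · rintro ⟨k, rfl⟩
    have h2 : Nat.Coprime 2 p :=
      (Nat.coprime_primes Nat.prime_two hp).mpr (by rintro rfl; simp [Nat.odd_iff] at hodd)
    set σ2 : C := ZMod.unitOfCoprime 2 h2 with hσ2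
    set t : C → ℕ := fun δ => ((δ : ZMod p)).val with ht
    have hdvd : ∀ δ : C, (p : ℤ) ∣ 2 * (t δ : ℤ) - (t (σ2 * δ) : ℤ) := by
      intro δ
      rw [← ZMod.intCast_zmod_eq_zero_iff_dvd]
      push_cast
      simp only [ht, ZMod.natCast_val, ZMod.cast_id, hσ2, Units.val_mul,
        ZMod.coe_unitOfCoprime]
      rw [Units.val_mul, ZMod.coe_unitOfCoprime]
      push_cast
      ring
    set e : C → ℤ := fun δ => (2 * (t δ : ℤ) - (t (σ2 * δ) : ℤ)) / p with he
    have hpe : ∀ δ : C, (p : ℤ) * e δ = 2 * (t δ : ℤ) - (t (σ2 * δ) : ℤ) := by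
      intro δ; rw [he]; exact Int.mul_ediv_cancel' (hdvd δ)
    set x0 : MonoidAlgebra ℤ C := ∑ δ : C, e δ • MonoidAlgebra.of ℤ C δ⁻¹ with hx0
    set y0 : MonoidAlgebra ℤ C := (2 : MonoidAlgebra ℤ C) - MonoidAlgebra.of ℤ C σ2 with hy0
    have hmul : ∀ (c : ℤ) (z : MonoidAlgebra ℤ C), (c : MonoidAlgebra ℤ C) * z = c • z :=
      fun c z => (zsmul_eq_mul z c).symm
    have hσθ : MonoidAlgebra.of ℤ C σ2 * θ
        = ∑ δ : C, (t (σ2 * δ) : ℤ) • MonoidAlgebra.of ℤ C δ⁻¹ := by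
      rw [hθ, Finset.mul_sum]
      refine Fintype.sum_equiv (Equiv.mulLeft σ2⁻¹) _ _ ?_
      intro δ
      have h1 : σ2 * (σ2⁻¹ * δ) = δ := by exact mul_inv_cancel_left σ2 δ
      have h2' : (σ2⁻¹ * δ)⁻¹ = σ2 * δ⁻¹ := by
        rw [mul_inv_rev, inv_inv, mul_comm]
      simp only [Equiv.coe_mulLeft]
      rw [mul_smul_comm, ← map_mul, h1, h2']
    have key : (p : MonoidAlgebra ℤ C) * x0 = y0 * θ := by
      have hpc : (p : MonoidAlgebra ℤ C) = ((p : ℤ) : MonoidAlgebra ℤ C) := by norm_cast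
      have h2c : (2 : MonoidAlgebra ℤ C) = ((2 : ℤ) : MonoidAlgebra ℤ C) := by norm_cast
      rw [hy0, sub_mul, hσθ, hθ, hx0, Finset.mul_sum, Finset.mul_sum,
        ← Finset.sum_sub_distrib]
      refine Finset.sum_congr rfl fun δ _ => ?_
      rw [hpc, hmul, h2c, hmul, smul_smul, smul_smul, hpe δ, ← sub_smul]
    have hreidx : ∑ δ : C, (t (σ2 * δ) : ℤ) = ∑ δ : C, (t δ : ℤ) :=
      Fintype.sum_equiv (Equiv.mulLeft σ2) _ _ (fun δ => rfl)
    have hSZ : ∑ δ : C, (t δ : ℤ) = (p : ℤ) * d := by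
      rw [← Nat.cast_sum]
      rw [show (∑ δ : C, t δ) = p * ((p-1)/2) from hS, hd]
      push_cast; ring
    have hεx0 : ε x0 = d := by
      apply mul_left_cancel₀ hp0
      rw [hx0, map_sum]
      simp only [map_zsmul, hεof, smul_eq_mul, mul_one]
      rw [Finset.mul_sum]
      simp only [hpe]
      rw [Finset.sum_sub_distrib, hreidx, ← Finset.sum_sub_distrib]
      have : ∀ δ : C, 2 * (t δ : ℤ) - (t δ : ℤ) = (t δ : ℤ) := fun δ => by ring
      simp only [this, hSZ]
    refine ⟨k • x0, ⟨k • y0, ?_⟩, ?_⟩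
    · rw [mul_smul_comm, key, smul_mul_assoc]
    · rw [map_zsmul, hεx0, smul_eq_mul, mul_comm]
end
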